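/- arXiv:2002.10678 — 8 statements merged into one kernel-verified Lean document; each statement's English description precedes it below -/
import Mathlib

section
/- For any convex lower semi-continuous function f : [0,∞) → ℝ with f(1) = 0, any probability measures P, Q on a measurable space with Q absolutely continuous with respect to P, and any bounded measurable function φ, the expectation of φ under Q is at most the f-divergence D_f(Q‖P) = E_P[f(dQ/dP)] plus E_P[f*(φ)], where f* is the convex conjugate of f. -/
/-! Pointwise Fenchel–Young, `r * y ≤ f r + f*(y)` for `r ≥ 0`, applied with `r = dQ/dP` and
`y = φ`, integrates under `P` to the claim, because `E_P[(dQ/dP) φ] = E_Q[φ]`. -/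

open MeasureTheory

lemma mul_le_add_of_mem_upperBounds {f : ℝ → ℝ} {y c : ℝ}
    (hc : c ∈ upperBounds {z : ℝ | ∃ x ≥ (0:ℝ), z = x * y - f x}) {x : ℝ} (hx : 0 ≤ x) :
    x * y ≤ f x + c := by
  have := hc ⟨x, hx, rfl⟩
  linarith

lemma integrable_toReal_rnDeriv_mul_of_abs_le {Ω : Type*} [MeasurableSpace Ω]
    {P Q : Measure Ω} [IsFiniteMeasure Q] {φ : Ω → ℝ} (hφ : AEStronglyMeasurable φ P)
    {C : ℝ} (hC : ∀ x, |φ x| ≤ C) :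
    Integrable (fun x => (Q.rnDeriv P x).toReal * φ x) P :=
  Measure.integrable_toReal_rnDeriv.mul_bdd hφ (ae_of_all _ hC)

theorem change_of_measure_unconstrained_f_divergence_general
    {Ω : Type*} [MeasurableSpace Ω] (P Q : Measure Ω)
    [IsProbabilityMeasure P] [IsProbabilityMeasure Q] (hQP : Q ≪ P)
    (f fstar : ℝ → ℝ)
    (hfstar : ∀ y : ℝ, IsLUB {z : ℝ | ∃ x ≥ (0:ℝ), z = x * y - f x} (fstar y))
    (φ : Ω → ℝ) (hφ : Measurable φ) (hbdd : ∃ C, ∀ x, |φ x| ≤ C)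
    (hint1 : Integrable (fun x => f (Q.rnDeriv P x).toReal) P)
    (hint2 : Integrable (fun x => fstar (φ x)) P) :
    ∫ x, φ x ∂Q ≤ ∫ x, f (Q.rnDeriv P x).toReal ∂P + ∫ x, fstar (φ x) ∂P := by
  obtain ⟨C, hC⟩ := hbdd
  rw [← integral_rnDeriv_smul hQP, ← integral_add hint1 hint2]
  exact integral_mono (integrable_toReal_rnDeriv_mul_of_abs_le hφ.aestronglyMeasurable hC)
    (hint1.add hint2) fun x =>
      mul_le_add_of_mem_upperBounds (hfstar (φ x)).1 ENNReal.toReal_nonneg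

theorem change_of_measure_unconstrained_f_divergence
    {Ω : Type*} [MeasurableSpace Ω] (P Q : Measure Ω)
    [IsProbabilityMeasure P] [IsProbabilityMeasure Q] (hQP : Q ≪ P)
    (f fstar : ℝ → ℝ)
    (hconv : ConvexOn ℝ (Set.Ici 0) f)
    (hlsc : LowerSemicontinuousOn f (Set.Ici 0))
    (hf1 : f 1 = 0)
    (hfstar : ∀ y : ℝ, IsLUB {z : ℝ | ∃ x ≥ (0:ℝ), z = x * y - f x} (fstar y))
    (φ : Ω → ℝ) (hφ : Measurable φ) (hbdd : ∃ C, ∀ x, |φ x| ≤ C)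
    (hint1 : Integrable (fun x => f (Q.rnDeriv P x).toReal) P)
    (hint2 : Integrable (fun x => fstar (φ x)) P) :
    ∫ x, φ x ∂Q ≤ ∫ x, f (Q.rnDeriv P x).toReal ∂P + ∫ x, fstar (φ x) ∂P :=
  change_of_measure_unconstrained_f_divergence_general P Q hQP f fstar hfstar φ hφ hbdd hint1 hint2
end

section
/- For α > 1, probability measures P, Q with Q ≪ P, and any nonnegative bounded measurable function φ, E_Q[φ] ≤ D_α(Q‖P) + ((α−1)^{α/(α−1)}/α)·E_P[φ^{α/(α−1)}] + 1/(α(α−1)), where D_α(Q‖P) = (1/(α(α−1)))·E_P[(dQ/dP)^α − 1]. -/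
/-!
Change of measure writes `E_Q[φ] = E_P[(dQ/dP) φ]`. Pointwise, Young's inequality with exponents
`α` and `α / (α - 1)`, rescaled by `(α - 1) ^ (1 / α)`, gives
`t y ≤ t ^ α / (α (α - 1)) + ((α - 1) ^ (α / (α - 1)) / α) y ^ (α / (α - 1))`,
which is the Fenchel–Young inequality for the generator of `D_α` and its convex conjugate.
Integrating against `P` with `t = dQ/dP`, `y = φ` yields the bound.
-/

open MeasureTheory ENNReal

lemma Real.mul_le_rpow_div_add_conj_rpow {α : ℝ} (hα : 1 < α) {t y : ℝ} (ht : 0 ≤ t)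
    (hy : 0 ≤ y) :
    t * y ≤ 1 / (α * (α - 1)) * t ^ α + (α - 1) ^ (α / (α - 1)) / α * y ^ (α / (α - 1)) := by
  have hα1 : 0 < α - 1 := by linarith
  set s : ℝ := (α - 1) ^ (1 / α)
  have hs : 0 < s := by positivity
  have hsα : s ^ α = α - 1 := by
    rw [← Real.rpow_mul hα1.le, one_div_mul_cancel (by linarith), Real.rpow_one]
  have hsq : s ^ (α / (α - 1)) * (α - 1) = (α - 1) ^ (α / (α - 1)) := by
    rw [← Real.rpow_mul hα1.le, ← Real.rpow_add_one hα1.ne']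
    congr 1
    field_simp
    ring
  calc t * y = (t / s) * (y * s) := by field_simp
    _ ≤ (t / s) ^ α / α + (y * s) ^ (α / (α - 1)) / (α / (α - 1)) :=
        Real.young_inequality_of_nonneg (by positivity) (by positivity)
          (Real.HolderConjugate.conjExponent hα)
    _ = _ := by
        rw [Real.div_rpow ht hs.le, Real.mul_rpow hy hs.le, hsα, ← hsq]
        field_simp

lemma integral_le_lintegral_rnDeriv_rpow_add {Ω : Type*} [MeasurableSpace Ω]
    {P Q : Measure Ω} [Q.HaveLebesgueDecomposition P] [SigmaFinite Q] (hQP : Q ≪ P)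
    {α : ℝ} (hα : 1 < α) (hL : ∫⁻ x, Q.rnDeriv P x ^ α ∂P ≠ ∞)
    {φ : Ω → ℝ} (h0 : ∀ x, 0 ≤ φ x)
    (hφq : Integrable (fun x ↦ φ x ^ (α / (α - 1))) P) :
    ∫ x, φ x ∂Q ≤ 1 / (α * (α - 1)) * (∫⁻ x, Q.rnDeriv P x ^ α ∂P).toReal
      + (α - 1) ^ (α / (α - 1)) / α * ∫ x, φ x ^ (α / (α - 1)) ∂P := by
  set g : Ω → ℝ := fun x ↦ (Q.rnDeriv P x).toReal
  have hmeas : AEMeasurable (fun x ↦ Q.rnDeriv P x ^ α) P :=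
    ((Measure.measurable_rnDeriv Q P).pow_const α).aemeasurable
  have hg_rpow : (fun x ↦ g x ^ α) = fun x ↦ (Q.rnDeriv P x ^ α).toReal :=
    funext fun x ↦ toReal_rpow _ _
  have hgα : Integrable (fun x ↦ g x ^ α) P := by
    rw [hg_rpow]
    exact integrable_toReal_of_lintegral_ne_top hmeas hL
  have hgα_integral : ∫ x, g x ^ α ∂P = (∫⁻ x, Q.rnDeriv P x ^ α ∂P).toReal := by
    rw [hg_rpow, integral_toReal hmeas]
    filter_upwards [Measure.rnDeriv_lt_top Q P] with x hx
    exact rpow_lt_top_of_nonneg (by linarith) hx.ne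
  calc ∫ x, φ x ∂Q = ∫ x, g x * φ x ∂P := (integral_rnDeriv_smul hQP).symm
    _ ≤ ∫ x, (1 / (α * (α - 1)) * g x ^ α
          + (α - 1) ^ (α / (α - 1)) / α * φ x ^ (α / (α - 1))) ∂P :=
        integral_mono_of_nonneg (.of_forall fun x ↦ mul_nonneg toReal_nonneg (h0 x))
          ((hgα.const_mul _).add (hφq.const_mul _))
          (.of_forall fun x ↦ Real.mul_le_rpow_div_add_conj_rpow hα toReal_nonneg (h0 x))
    _ = _ := by
        rw [integral_add (hgα.const_mul _) (hφq.const_mul _), integral_const_mul,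
          integral_const_mul, hgα_integral]

theorem change_of_measure_unconstrained_alpha_divergence
    {Ω : Type*} [MeasurableSpace Ω] (P Q : Measure Ω)
    [IsProbabilityMeasure P] [IsProbabilityMeasure Q] (hQP : Q ≪ P)
    (α : ℝ) (hα : 1 < α)
    (φ : Ω → ℝ) (hφ : Measurable φ) (h0 : ∀ x, 0 ≤ φ x) (hbdd : ∃ C, ∀ x, |φ x| ≤ C) :
    ENNReal.ofReal (∫ x, φ x ∂Q -
        (((α - 1) ^ (α / (α - 1)) / α) * ∫ x, (φ x) ^ (α / (α - 1)) ∂P + 1 / (α * (α - 1)))) ≤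
      ENNReal.ofReal (1 / (α * (α - 1))) * ((∫⁻ x, (Q.rnDeriv P x) ^ α ∂P) - 1) := by
  have hk : 0 < 1 / (α * (α - 1)) := by
    have : 0 < α - 1 := by linarith
    positivity
  set L := ∫⁻ x, Q.rnDeriv P x ^ α ∂P
  by_cases hL : L = ∞
  · rw [hL, top_sub one_ne_top, mul_top (ofReal_pos.2 hk).ne']
    exact le_top
  obtain ⟨C, hC⟩ := hbdd
  have hq : 0 ≤ α / (α - 1) := div_nonneg (by linarith) (by linarith)
  have hφq : Integrable (fun x ↦ φ x ^ (α / (α - 1))) P :=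
    .of_bound (hφ.pow_const _).aestronglyMeasurable (C ^ (α / (α - 1))) (.of_forall fun x ↦ by
      rw [Real.norm_of_nonneg (Real.rpow_nonneg (h0 x) _)]
      exact Real.rpow_le_rpow (h0 x) ((le_abs_self _).trans (hC x)) hq)
  have key := integral_le_lintegral_rnDeriv_rpow_add hQP hα hL h0 hφq
  calc ENNReal.ofReal (∫ x, φ x ∂Q -
        ((α - 1) ^ (α / (α - 1)) / α * ∫ x, φ x ^ (α / (α - 1)) ∂P + 1 / (α * (α - 1))))
      ≤ ENNReal.ofReal (1 / (α * (α - 1)) * (L.toReal - 1)) := ofReal_le_ofReal (by linarith)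
    _ = ENNReal.ofReal (1 / (α * (α - 1))) * (L - 1) := by
        rw [ofReal_mul hk.le, ofReal_sub _ zero_le_one, ofReal_toReal hL, ofReal_one]
end

section
/- For probability measures P, Q with Q ≪ P and any measurable function φ taking values in (−∞, 1) that is bounded, E_Q[φ] ≤ H²(Q‖P) + E_P[φ/(1−φ)], where H²(Q‖P) = E_P[(√(dQ/dP) − 1)²] is the squared Hellinger distance. -/
/-!
Write `g = dQ/dP`, so that `E_Q[φ] = E_P[g φ]`. For `a < 1` and every real `t`,
`a t² ≤ (t - 1)² + a / (1 - a)`, since the difference is `((1 - a) t - 1)² / (1 - a)`.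
Taking `a = φ(x)` and `t = √(g x)` and integrating against `P` gives the inequality.
-/

open MeasureTheory

lemma mul_sq_le_sub_one_sq_add_div {a : ℝ} (ha : a < 1) (t : ℝ) :
    a * t ^ 2 ≤ (t - 1) ^ 2 + a / (1 - a) := by
  have hpos : 0 < 1 - a := by linarith
  have hdiv : a / (1 - a) * (1 - a) = a := div_mul_cancel₀ _ hpos.ne'
  nlinarith [sq_nonneg ((1 - a) * t - 1)]

section

variable {Ω : Type*} [MeasurableSpace Ω] {μ : Measure Ω} {g φ : Ω → ℝ}

lemma MeasureTheory.Integrable.sqrt_sub_one_sq [IsFiniteMeasure μ] (hg : Integrable g μ) (hg0 : 0 ≤ᵐ[μ] g) :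
    Integrable (fun x => (√(g x) - 1) ^ 2) μ := by
  refine (hg.add (integrable_const 1)).mono' ?_ ?_
  · exact ((hg.aemeasurable.sqrt.sub_const 1).pow_const 2).aestronglyMeasurable
  · filter_upwards [hg0] with x hx
    have hsq : √(g x) ^ 2 = g x := Real.sq_sqrt hx
    rw [Real.norm_of_nonneg (sq_nonneg _), Pi.add_apply]
    nlinarith [Real.sqrt_nonneg (g x)]

lemma integral_mul_le_integral_sqrt_sub_one_sq_add [IsFiniteMeasure μ] (hg : Integrable g μ)
    (hg0 : 0 ≤ᵐ[μ] g) (hlt : ∀ᵐ x ∂μ, φ x < 1) (hgφ : Integrable (fun x => g x * φ x) μ)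
    (hint : Integrable (fun x => φ x / (1 - φ x)) μ) :
    ∫ x, g x * φ x ∂μ ≤ ∫ x, (√(g x) - 1) ^ 2 ∂μ + ∫ x, φ x / (1 - φ x) ∂μ := by
  have hsq := hg.sqrt_sub_one_sq hg0
  rw [← integral_add hsq hint]
  refine integral_mono_ae hgφ (hsq.add hint) ?_
  filter_upwards [hg0, hlt] with x hx hφx
  have key := mul_sq_le_sub_one_sq_add_div hφx √(g x)
  rw [Real.sq_sqrt hx] at key
  simpa [mul_comm] using key

end

theorem change_of_measure_squared_hellinger
    {Ω : Type*} [MeasurableSpace Ω] (P Q : Measure Ω)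
    [IsProbabilityMeasure P] [IsProbabilityMeasure Q] (hQP : Q ≪ P)
    (φ : Ω → ℝ) (hφ : Measurable φ) (hlt : ∀ x, φ x < 1) (hbdd : ∃ C, ∀ x, |φ x| ≤ C)
    (hint : Integrable (fun x => φ x / (1 - φ x)) P) :
    ∫ x, φ x ∂Q ≤
      ∫ x, (Real.sqrt (Q.rnDeriv P x).toReal - 1) ^ 2 ∂P + ∫ x, φ x / (1 - φ x) ∂P := by
  obtain ⟨C, hC⟩ := hbdd
  have hφQ : Integrable φ Q := .of_bound hφ.aestronglyMeasurable C (ae_of_all _ hC)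
  rw [← integral_toReal_rnDeriv_mul hQP]
  exact integral_mul_le_integral_sqrt_sub_one_sq_add Measure.integrable_toReal_rnDeriv
    (ae_of_all _ fun _ => ENNReal.toReal_nonneg) (ae_of_all _ hlt)
    ((integrable_toReal_rnDeriv_mul_iff hQP).2 hφQ) hint
end

section
/- For probability measures P, Q with Q ≪ P, P ≪ Q, and any bounded measurable function φ with φ < 1 pointwise, E_Q[φ] ≤ KL(P‖Q) + E_P[log(1/(1−φ))], where KL(P‖Q) = E_P[log(dP/dQ)] is the reverse KL-divergence of Q from P. -/
/-!
Tilting `Q` by `log (1 - φ)` reweights it by `(1 - φ) / E_Q[1 - φ]`, and Gibbs' inequality for `P`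
against this tilted measure is the Donsker–Varadhan bound
`-log E_Q[1 - φ] ≤ KL(P‖Q) + E_P[log (1 / (1 - φ))]`. Then `1 - y ≤ -log y` with `y = E_Q[1 - φ]`.
-/

open MeasureTheory Real InformationTheory

section ChangeOfMeasure

variable {α : Type*} [MeasurableSpace α] {μ ν : Measure α} [IsProbabilityMeasure μ] [SigmaFinite ν]
  [NeZero ν]

theorem integral_sub_log_integral_exp_le_integral_llr {f : α → ℝ} (hμν : μ ≪ ν)
    (hfμ : Integrable f μ) (hfν : Integrable (fun x ↦ exp (f x)) ν)
    (h_int : Integrable (llr μ ν) μ) :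
    ∫ x, f x ∂μ - log (∫ x, exp (f x) ∂ν) ≤ ∫ x, llr μ ν x ∂μ := by
  have := isProbabilityMeasure_tilted hfν
  have gibbs := integral_llr_add_sub_measure_univ_nonneg
    (hμν.trans (absolutelyContinuous_tilted hfν)) (integrable_llr_tilted_right hμν hfμ h_int hfν)
  rw [integral_llr_tilted_right hμν hfμ hfν h_int] at gibbs
  simp only [probReal_univ, add_sub_cancel_right] at gibbs
  linarith

theorem one_sub_integral_le_integral_llr_sub_integral_log {g : α → ℝ} (hμν : μ ≪ ν)
    (hg : ∀ x, 0 < g x) (hgμ : Integrable (fun x ↦ log (g x)) μ) (hgν : Integrable g ν)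
    (h_int : Integrable (llr μ ν) μ) :
    1 - ∫ x, g x ∂ν ≤ ∫ x, llr μ ν x ∂μ - ∫ x, log (g x) ∂μ := by
  have hexp : (fun x ↦ exp (log (g x))) = g := funext fun x ↦ exp_log (hg x)
  have hexpν : Integrable (fun x ↦ exp (log (g x))) ν := by rwa [hexp]
  have dv := integral_sub_log_integral_exp_le_integral_llr hμν hgμ hexpν h_int
  have hpos := integral_exp_pos hexpν
  rw [hexp] at dv hpos
  linarith [log_le_sub_one_of_pos hpos]

end ChangeOfMeasure

theorem change_of_measure_reverse_kl_general
    {Ω : Type*} [MeasurableSpace Ω] (P Q : Measure Ω)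
    [IsProbabilityMeasure P] [IsProbabilityMeasure Q] (hPQ : P ≪ Q)
    (φ : Ω → ℝ) (hφ : Measurable φ) (hlt : ∀ x, φ x < 1) (hbdd : ∃ C, ∀ x, |φ x| ≤ C)
    (hKL : Integrable (fun x => Real.log (P.rnDeriv Q x).toReal) P)
    (hint : Integrable (fun x => Real.log (1 / (1 - φ x))) P) :
    ∫ x, φ x ∂Q ≤
      ∫ x, Real.log (P.rnDeriv Q x).toReal ∂P + ∫ x, Real.log (1 / (1 - φ x)) ∂P := by
  obtain ⟨C, hC⟩ := hbdd
  have hφQ : Integrable φ Q :=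
    .of_bound hφ.aestronglyMeasurable C (.of_forall fun x ↦ (norm_eq_abs _).trans_le (hC x))
  have hlog_inv : ∀ x, log (1 / (1 - φ x)) = -log (1 - φ x) := fun x ↦ by rw [one_div, log_inv]
  have key := one_sub_integral_le_integral_llr_sub_integral_log hPQ
    (fun x ↦ sub_pos.2 (hlt x)) (by simpa only [hlog_inv, neg_neg] using hint.fun_neg)
    ((integrable_const 1).sub' hφQ) hKL
  rw [integral_sub (integrable_const 1) hφQ, integral_const, probReal_univ, one_smul] at key
  simp only [hlog_inv, integral_neg, ← llr_def]
  linarith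

theorem change_of_measure_reverse_kl
    {Ω : Type*} [MeasurableSpace Ω] (P Q : Measure Ω)
    [IsProbabilityMeasure P] [IsProbabilityMeasure Q] (hQP : Q ≪ P) (hPQ : P ≪ Q)
    (φ : Ω → ℝ) (hφ : Measurable φ) (hlt : ∀ x, φ x < 1) (hbdd : ∃ C, ∀ x, |φ x| ≤ C)
    (hKL : Integrable (fun x => Real.log (P.rnDeriv Q x).toReal) P)
    (hint : Integrable (fun x => Real.log (1 / (1 - φ x))) P) :
    ∫ x, φ x ∂Q ≤
      ∫ x, Real.log (P.rnDeriv Q x).toReal ∂P + ∫ x, Real.log (1 / (1 - φ x)) ∂P :=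
  change_of_measure_reverse_kl_general P Q hPQ φ hφ hlt hbdd hKL hint
end

section
/- For probability measures P, Q with Q ≪ P, P ≪ Q, and any bounded measurable function φ with φ < 1 pointwise, E_Q[φ] ≤ χ̄²(Q‖P) + 2 − 2·E_P[√(1−φ)], where χ̄²(Q‖P) = E_Q[(dP/dQ − 1)²] is the Neyman chi-squared divergence. -/
/-!
With `r = dP/dQ` and `a = √(1 - φ)` one has pointwise
`(r - 1)² - φ + 2 r (1 - a) = (r - a)² ≥ 0`.
Integrating against `Q` and changing measure in `∫ r (1 - a) dQ = ∫ (1 - a) dP` gives the bound.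
-/

open MeasureTheory

lemma sub_two_mul_mul_one_sub_sqrt_le_sq {x : ℝ} (hx : x ≤ 1) (r : ℝ) :
    x - 2 * (r * (1 - √(1 - x))) ≤ (r - 1) ^ 2 := by
  have hsq : √(1 - x) ^ 2 = 1 - x := Real.sq_sqrt (by linarith)
  nlinarith [sq_nonneg (r - √(1 - x))]

section

variable {Ω : Type*} [MeasurableSpace Ω] {φ : Ω → ℝ}

lemma integrable_sqrt_one_sub (μ : Measure Ω) [IsFiniteMeasure μ] (hφ : Measurable φ)
    (hbdd : ∃ C, ∀ x, |φ x| ≤ C) : Integrable (fun x ↦ √(1 - φ x)) μ := by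
  obtain ⟨C, hC⟩ := hbdd
  refine Integrable.of_bound (by fun_prop) √(1 + C) (ae_of_all _ fun x ↦ ?_)
  rw [Real.norm_of_nonneg (Real.sqrt_nonneg _)]
  exact Real.sqrt_le_sqrt (by linarith [(abs_le.mp (hC x)).1])

lemma integral_sub_two_sub_two_integral_sqrt_le {P Q : Measure Ω} [IsProbabilityMeasure P]
    [IsFiniteMeasure Q] (hPQ : P ≪ Q) (hφ : Measurable φ) (hφ_le : ∀ x, φ x ≤ 1)
    (hbdd : ∃ C, ∀ x, |φ x| ≤ C)
    (hχ : Integrable (fun x ↦ ((P.rnDeriv Q x).toReal - 1) ^ 2) Q) :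
    ∫ x, φ x ∂Q - (2 - 2 * ∫ x, √(1 - φ x) ∂P) ≤
      ∫ x, ((P.rnDeriv Q x).toReal - 1) ^ 2 ∂Q := by
  have hφ_int : Integrable φ Q := by
    obtain ⟨C, hC⟩ := hbdd
    exact Integrable.of_bound hφ.aestronglyMeasurable C (ae_of_all _ hC)
  have hsqrt_int := integrable_sqrt_one_sub P hφ hbdd
  have hweighted_int : Integrable (fun x ↦ (P.rnDeriv Q x).toReal * (1 - √(1 - φ x))) Q :=
    (integrable_toReal_rnDeriv_mul_iff hPQ).mpr ((integrable_const 1).sub hsqrt_int)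
  have hchange : ∫ x, (P.rnDeriv Q x).toReal * (1 - √(1 - φ x)) ∂Q =
      ∫ x, (1 - √(1 - φ x)) ∂P :=
    integral_rnDeriv_smul hPQ
  calc ∫ x, φ x ∂Q - (2 - 2 * ∫ x, √(1 - φ x) ∂P)
      = ∫ x, (φ x - 2 * ((P.rnDeriv Q x).toReal * (1 - √(1 - φ x)))) ∂Q := by
        rw [integral_sub hφ_int (hweighted_int.const_mul 2), integral_const_mul, hchange,
          integral_sub (integrable_const 1) hsqrt_int, integral_const, probReal_univ, one_smul]
        ring
    _ ≤ ∫ x, ((P.rnDeriv Q x).toReal - 1) ^ 2 ∂Q :=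
        integral_mono (hφ_int.sub (hweighted_int.const_mul 2)) hχ fun x ↦
          sub_two_mul_mul_one_sub_sqrt_le_sq (hφ_le x) _

end

theorem change_of_measure_neyman_chi_sq_general
    {Ω : Type*} [MeasurableSpace Ω] (P Q : Measure Ω)
    [IsProbabilityMeasure P] [IsProbabilityMeasure Q] (hPQ : P ≪ Q)
    (φ : Ω → ℝ) (hφ : Measurable φ) (hlt : ∀ x, φ x < 1) (hbdd : ∃ C, ∀ x, |φ x| ≤ C) :
    ENNReal.ofReal (∫ x, φ x ∂Q - (2 - 2 * ∫ x, Real.sqrt (1 - φ x) ∂P)) ≤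
      ∫⁻ x, ENNReal.ofReal (((P.rnDeriv Q x).toReal - 1) ^ 2) ∂Q := by
  have hχ_nonneg : 0 ≤ᵐ[Q] fun x ↦ ((P.rnDeriv Q x).toReal - 1) ^ 2 :=
    ae_of_all _ fun _ ↦ sq_nonneg _
  by_cases hχ : Integrable (fun x ↦ ((P.rnDeriv Q x).toReal - 1) ^ 2) Q
  · rw [← ofReal_integral_eq_lintegral_ofReal hχ hχ_nonneg]
    exact ENNReal.ofReal_le_ofReal
      (integral_sub_two_sub_two_integral_sqrt_le hPQ hφ (fun x ↦ (hlt x).le) hbdd hχ)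
  · have hχ_meas : Measurable fun x ↦ ((P.rnDeriv Q x).toReal - 1) ^ 2 := by fun_prop
    rw [not_ne_iff.mp ((lintegral_ofReal_ne_top_iff_integrable
      hχ_meas.aestronglyMeasurable hχ_nonneg).not.mpr hχ)]
    exact le_top

theorem change_of_measure_neyman_chi_sq
    {Ω : Type*} [MeasurableSpace Ω] (P Q : Measure Ω)
    [IsProbabilityMeasure P] [IsProbabilityMeasure Q] (hQP : Q ≪ P) (hPQ : P ≪ Q)
    (φ : Ω → ℝ) (hφ : Measurable φ) (hlt : ∀ x, φ x < 1) (hbdd : ∃ C, ∀ x, |φ x| ≤ C) :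
    ENNReal.ofReal (∫ x, φ x ∂Q - (2 - 2 * ∫ x, Real.sqrt (1 - φ x) ∂P)) ≤
      ∫⁻ x, ENNReal.ofReal (((P.rnDeriv Q x).toReal - 1) ^ 2) ∂Q :=
  change_of_measure_neyman_chi_sq_general P Q hPQ φ hφ hlt hbdd
end

section
/- For α > 1, probability measures P, Q with Q ≪ P, and any measurable function φ with E_P[|φ|^{α/(α−1)}] < ∞, one has E_Q[φ] ≤ (α(α−1)·D_α(Q‖P) + 1)^{1/α} · (E_P[|φ|^{α/(α−1)}])^{(α−1)/α}, where D_α(Q‖P) = (1/(α(α−1)))·E_P[(dQ/dP)^α − 1]. -/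
/-!
Write `dQ = f dP`. Then `∫ φ dQ ≤ ∫ |φ| dQ = ∫ f |φ| dP`, and Hölder's inequality in `L^α(P)` ×
`L^{α/(α-1)}(P)` bounds the last integral by `(∫ f^α dP)^{1/α} (∫ |φ|^{α/(α-1)} dP)^{(α-1)/α}`;
for a probability measure `P`, `∫ f^α dP = α(α-1) D_α(Q‖P) + 1`.
-/

open MeasureTheory

section

variable {X : Type*} [MeasurableSpace X]

lemma memLp_ofReal_of_integrable_rpow {μ : Measure X} {g : X → ℝ} {p : ℝ} (hp : 0 < p)
    (hg : 0 ≤ g) (hint : Integrable (fun x => g x ^ p) μ) : MemLp g (ENNReal.ofReal p) μ := by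
  have hmeas : AEStronglyMeasurable g μ := by
    have hroot : (fun x => (g x ^ p) ^ p⁻¹) = g :=
      funext fun x => Real.rpow_rpow_inv (hg x) hp.ne'
    rw [← hroot]
    exact (Real.continuous_rpow_const (inv_nonneg.2 hp.le)).comp_aestronglyMeasurable hint.1
  rw [← integrable_norm_rpow_iff hmeas (by simpa using hp) ENNReal.ofReal_ne_top,
    ENNReal.toReal_ofReal hp.le]
  simpa only [Real.norm_of_nonneg (hg _)] using hint

lemma integral_abs_le_rnDeriv_Lp_mul_Lq {μ ν : Measure X} [Measure.HaveLebesgueDecomposition μ ν]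
    [SigmaFinite μ] (hμν : μ ≪ ν) {p q : ℝ} (hpq : p.HolderConjugate q) {φ : X → ℝ}
    (hd : Integrable (fun x => (μ.rnDeriv ν x).toReal ^ p) ν)
    (hφ : Integrable (fun x => |φ x| ^ q) ν) :
    ∫ x, |φ x| ∂μ ≤
      (∫ x, (μ.rnDeriv ν x).toReal ^ p ∂ν) ^ (1 / p) * (∫ x, |φ x| ^ q ∂ν) ^ (1 / q) := by
  have hd_nonneg : 0 ≤ fun x => (μ.rnDeriv ν x).toReal := fun _ => ENNReal.toReal_nonneg
  have hφ_nonneg : 0 ≤ fun x => |φ x| := fun x => abs_nonneg (φ x)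
  rw [← integral_rnDeriv_smul hμν]
  exact integral_mul_le_Lp_mul_Lq_of_nonneg hpq (.of_forall hd_nonneg) (.of_forall hφ_nonneg)
    (memLp_ofReal_of_integrable_rpow hpq.pos hd_nonneg hd)
    (memLp_ofReal_of_integrable_rpow hpq.symm.pos hφ_nonneg hφ)

end

theorem multiplicative_change_of_measure_alpha_general
    {Ω : Type*} [MeasurableSpace Ω] (P Q : Measure Ω)
    [IsProbabilityMeasure P] [IsProbabilityMeasure Q] (hQP : Q ≪ P)
    (α : ℝ) (hα : 1 < α)
    (φ : Ω → ℝ)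
    (hmom : Integrable (fun x => |φ x| ^ (α / (α - 1))) P)
    (hd : Integrable (fun x => ((Q.rnDeriv P x).toReal) ^ α) P) :
    ∫ x, φ x ∂Q ≤
      (α * (α - 1) * ((1 / (α * (α - 1))) * ∫ x, (((Q.rnDeriv P x).toReal) ^ α - 1) ∂P) + 1)
          ^ (1 / α) *
        (∫ x, |φ x| ^ (α / (α - 1)) ∂P) ^ ((α - 1) / α) := by
  have hαα : α * (α - 1) ≠ 0 := mul_ne_zero (by linarith) (by linarith)
  have hmoment : α * (α - 1) * ((1 / (α * (α - 1))) * ∫ x, (((Q.rnDeriv P x).toReal) ^ α - 1) ∂P)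
      + 1 = ∫ x, (Q.rnDeriv P x).toReal ^ α ∂P := by
    rw [one_div, mul_inv_cancel_left₀ hαα, integral_sub hd (integrable_const 1)]
    simp
  calc ∫ x, φ x ∂Q ≤ ∫ x, |φ x| ∂Q := (le_abs_self _).trans abs_integral_le_integral_abs
    _ ≤ _ := integral_abs_le_rnDeriv_Lp_mul_Lq hQP (.conjExponent hα) hd hmom
    _ = _ := by rw [hmoment, Real.conjExponent, one_div_div]

theorem multiplicative_change_of_measure_alpha
    {Ω : Type*} [MeasurableSpace Ω] (P Q : Measure Ω)
    [IsProbabilityMeasure P] [IsProbabilityMeasure Q] (hQP : Q ≪ P)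
    (α : ℝ) (hα : 1 < α)
    (φ : Ω → ℝ) (hφ : Measurable φ) (hφQ : Integrable φ Q)
    (hmom : Integrable (fun x => |φ x| ^ (α / (α - 1))) P)
    (hd : Integrable (fun x => ((Q.rnDeriv P x).toReal) ^ α) P) :
    ∫ x, φ x ∂Q ≤
      (α * (α - 1) * ((1 / (α * (α - 1))) * ∫ x, (((Q.rnDeriv P x).toReal) ^ α - 1) ∂P) + 1)
          ^ (1 / α) *
        (∫ x, |φ x| ^ (α / (α - 1)) ∂P) ^ ((α - 1) / α) :=
  multiplicative_change_of_measure_alpha_general P Q hQP α hα φ hmom hd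
end

section
/- Generalized Hammersley–Chapman–Robbins: for α > 1, probability measures P, Q with Q ≪ P, and any measurable function φ with E_P[|φ − μ_P|^{α/(α−1)}] < ∞ where μ_P = E_P[φ], one has |E_Q[φ] − E_P[φ]| ≤ (D̃_α(Q‖P))^{1/α} · (E_P[|φ − μ_P|^{α/(α−1)}])^{(α−1)/α}, where D̃_α(Q‖P) = E_P[|dQ/dP − 1|^α] is the pseudo α-divergence. -/
/-!
Since `∫ (dQ/dP) (φ - c) dP = ∫ (φ - c) dQ` and both measures have mass one, the difference of
means is `∫ (dQ/dP - 1) (φ - c) dP` for every constant `c`. Taking `c = E_P[φ]` and applying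
Hölder's inequality with the conjugate exponents `α` and `α / (α - 1)` gives the bound.
-/

open MeasureTheory

lemma abs_integral_mul_le_integral_abs_rpow_mul_integral_abs_rpow {X : Type*} [MeasurableSpace X]
    {μ : Measure X} {f g : X → ℝ} {p q : ℝ} (hpq : p.HolderConjugate q)
    (hf : AEStronglyMeasurable f μ) (hg : AEStronglyMeasurable g μ)
    (hfp : Integrable (fun x => |f x| ^ p) μ) (hgq : Integrable (fun x => |g x| ^ q) μ) :
    |∫ x, f x * g x ∂μ| ≤ (∫ x, |f x| ^ p ∂μ) ^ (1 / p) * (∫ x, |g x| ^ q ∂μ) ^ (1 / q) := by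
  have memLp_of {h : X → ℝ} {r : ℝ} (hr : 0 < r) (hh : AEStronglyMeasurable h μ)
      (hhr : Integrable (fun x => |h x| ^ r) μ) : MemLp h (ENNReal.ofReal r) μ := by
    rw [← integrable_norm_rpow_iff hh (by simpa using hr) ENNReal.ofReal_ne_top,
      ENNReal.toReal_ofReal hr.le]
    simpa only [Real.norm_eq_abs] using hhr
  calc |∫ x, f x * g x ∂μ| ≤ ∫ x, ‖f x‖ * ‖g x‖ ∂μ := by
        simpa only [Real.norm_eq_abs, norm_mul] using norm_integral_le_integral_norm (fun x => f x * g x)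
    _ ≤ _ := by
        simpa only [Real.norm_eq_abs] using integral_mul_norm_le_Lp_mul_Lq hpq
          (memLp_of hpq.pos hf hfp) (memLp_of hpq.symm.pos hg hgq)

lemma integral_sub_integral_eq_integral_rnDeriv_sub_one_mul {Ω : Type*} [MeasurableSpace Ω]
    {P Q : Measure Ω} [IsProbabilityMeasure P] [IsProbabilityMeasure Q] (hQP : Q ≪ P)
    {φ : Ω → ℝ} (hφP : Integrable φ P) (hφQ : Integrable φ Q) (c : ℝ) :
    ∫ x, φ x ∂Q - ∫ x, φ x ∂P = ∫ x, ((Q.rnDeriv P x).toReal - 1) * (φ x - c) ∂P := by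
  have hcQ : Integrable (fun x => φ x - c) Q := hφQ.sub (integrable_const c)
  have hcP : Integrable (fun x => φ x - c) P := hφP.sub (integrable_const c)
  have hrnQ : Integrable (fun x => (Q.rnDeriv P x).toReal * (φ x - c)) P :=
    (integrable_rnDeriv_smul_iff hQP).mpr hcQ
  have change_of_measure : ∫ x, (Q.rnDeriv P x).toReal * (φ x - c) ∂P = ∫ x, (φ x - c) ∂Q :=
    integral_rnDeriv_smul hQP
  simp only [sub_mul, one_mul]
  rw [integral_sub hrnQ hcP, change_of_measure, integral_sub hφQ (integrable_const c),
    integral_sub hφP (integrable_const c)]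
  simp

theorem generalized_hcr_general
    {Ω : Type*} [MeasurableSpace Ω] (P Q : Measure Ω)
    [IsProbabilityMeasure P] [IsProbabilityMeasure Q] (hQP : Q ≪ P)
    (α : ℝ) (hα : 1 < α)
    (φ : Ω → ℝ) (hφP : Integrable φ P) (hφQ : Integrable φ Q)
    (hmom : Integrable (fun x => |φ x - ∫ y, φ y ∂P| ^ (α / (α - 1))) P)
    (hdiv : Integrable (fun x => |(Q.rnDeriv P x).toReal - 1| ^ α) P) :
    |∫ x, φ x ∂Q - ∫ x, φ x ∂P| ≤
      (∫ x, |(Q.rnDeriv P x).toReal - 1| ^ α ∂P) ^ (1 / α) *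
        (∫ x, |φ x - ∫ y, φ y ∂P| ^ (α / (α - 1)) ∂P) ^ ((α - 1) / α) := by
  have hconj : α.HolderConjugate (α / (α - 1)) :=
    (Real.holderConjugate_iff_eq_conjExponent hα).2 rfl
  have hexp : 1 / (α / (α - 1)) = (α - 1) / α := one_div_div α (α - 1)
  rw [integral_sub_integral_eq_integral_rnDeriv_sub_one_mul hQP hφP hφQ (∫ y, φ y ∂P), ← hexp]
  exact abs_integral_mul_le_integral_abs_rpow_mul_integral_abs_rpow hconj
    ((Measure.measurable_rnDeriv Q P).ennreal_toReal.sub measurable_const).aestronglyMeasurable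
    (hφP.aestronglyMeasurable.sub aestronglyMeasurable_const) hdiv hmom

theorem generalized_hcr
    {Ω : Type*} [MeasurableSpace Ω] (P Q : Measure Ω)
    [IsProbabilityMeasure P] [IsProbabilityMeasure Q] (hQP : Q ≪ P)
    (α : ℝ) (hα : 1 < α)
    (φ : Ω → ℝ) (hφ : Measurable φ) (hφP : Integrable φ P) (hφQ : Integrable φ Q)
    (hmom : Integrable (fun x => |φ x - ∫ y, φ y ∂P| ^ (α / (α - 1))) P)
    (hdiv : Integrable (fun x => |(Q.rnDeriv P x).toReal - 1| ^ α) P) :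
    |∫ x, φ x ∂Q - ∫ x, φ x ∂P| ≤
      (∫ x, |(Q.rnDeriv P x).toReal - 1| ^ α ∂P) ^ (1 / α) *
        (∫ x, |φ x - ∫ y, φ y ∂P| ^ (α / (α - 1)) ∂P) ^ ((α - 1) / α) :=
  generalized_hcr_general P Q hQP α hα φ hφP hφQ hmom hdiv
end

section
/- Hammersley–Chapman–Robbins inequality: for probability measures P, Q with Q ≪ P and any measurable φ with 0 < Var_P[φ] < ∞, χ²(Q‖P) ≥ (E_Q[φ] − E_P[φ])² / Var_P[φ]. -/
open MeasureTheory

/-! With `ρ = dQ/dP`, the difference `E_Q[φ] - E_P[φ]` is the `P`-covariance of `φ` and `ρ - 1`,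
since `E_P[ρ] = 1` and `E_P[ρ φ] = E_Q[φ]`. Cauchy–Schwarz in `L²(P)` bounds its square by
`Var_P[φ] · E_P[(ρ - 1)²] = Var_P[φ] · χ²(Q‖P)`. -/

theorem sq_integral_mul_le_integral_sq_mul_integral_sq {α : Type*} [MeasurableSpace α]
    {μ : Measure α} {f g : α → ℝ} (hf : MemLp f 2 μ) (hg : MemLp g 2 μ) :
    (∫ x, f x * g x ∂μ) ^ 2 ≤ (∫ x, f x ^ 2 ∂μ) * ∫ x, g x ^ 2 ∂μ := by
  have inner_toLp {u v : α → ℝ} (hu : MemLp u 2 μ) (hv : MemLp v 2 μ) :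
      inner ℝ hu.toLp hv.toLp = ∫ x, u x * v x ∂μ := by
    rw [L2.inner_def]
    refine integral_congr_ae ?_
    filter_upwards [hu.coeFn_toLp, hv.coeFn_toLp] with x hux hvx
    simp [hux, hvx, mul_comm]
  simpa only [inner_toLp, ← sq] using real_inner_mul_inner_self_le hf.toLp hg.toLp

theorem integral_sub_mul_toReal_rnDeriv_sub_one {α : Type*} [MeasurableSpace α]
    {μ ν : Measure α} [IsProbabilityMeasure μ] [IsProbabilityMeasure ν] (hμν : μ ≪ ν)
    {f : α → ℝ} (hfμ : Integrable f μ) (hfν : Integrable f ν) (c : ℝ) :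
    ∫ x, (f x - c) * ((μ.rnDeriv ν x).toReal - 1) ∂ν = ∫ x, f x ∂μ - ∫ x, f x ∂ν := by
  have hρ : Integrable (fun x ↦ (μ.rnDeriv ν x).toReal) ν := Measure.integrable_toReal_rnDeriv
  have hρf : Integrable (fun x ↦ (μ.rnDeriv ν x).toReal * f x) ν :=
    (integrable_toReal_rnDeriv_mul_iff hμν).2 hfμ
  have hexpand : ∀ x, (f x - c) * ((μ.rnDeriv ν x).toReal - 1) =
      ((μ.rnDeriv ν x).toReal * f x - f x) - (c * (μ.rnDeriv ν x).toReal - c) := by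
    intro x; ring
  have hl : Integrable (fun x ↦ (μ.rnDeriv ν x).toReal * f x - f x) ν := hρf.sub hfν
  have hr : Integrable (fun x ↦ c * (μ.rnDeriv ν x).toReal - c) ν :=
    (hρ.const_mul c).sub (integrable_const c)
  simp_rw [hexpand]
  rw [integral_sub hl hr, integral_sub hρf hfν, integral_sub (hρ.const_mul c) (integrable_const c),
    integral_const_mul, integral_toReal_rnDeriv_mul hμν, Measure.integral_toReal_rnDeriv hμν]
  simp

theorem memLp_two_of_lintegral_ofReal_sq_ne_top {α : Type*} [MeasurableSpace α]
    {μ : Measure α} {f : α → ℝ} (hf : AEStronglyMeasurable f μ)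
    (h : ∫⁻ x, ENNReal.ofReal (f x ^ 2) ∂μ ≠ ⊤) : MemLp f 2 μ :=
  (memLp_two_iff_integrable_sq hf).2
    ⟨hf.pow 2, (hasFiniteIntegral_iff_ofReal (.of_forall fun x ↦ sq_nonneg (f x))).2 h.lt_top⟩

theorem hcr_inequality_general
    {Ω : Type*} [MeasurableSpace Ω] (P Q : Measure Ω)
    [IsProbabilityMeasure P] [IsProbabilityMeasure Q] (hQP : Q ≪ P)
    (φ : Ω → ℝ) (hφP : Integrable φ P) (hφQ : Integrable φ Q)
    (hvar : Integrable (fun x => (φ x - ∫ y, φ y ∂P) ^ 2) P) :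
    ENNReal.ofReal ((∫ x, φ x ∂Q - ∫ x, φ x ∂P) ^ 2 / ∫ x, (φ x - ∫ y, φ y ∂P) ^ 2 ∂P) ≤
      ∫⁻ x, ENNReal.ofReal (((Q.rnDeriv P x).toReal - 1) ^ 2) ∂P := by
  set h : Ω → ℝ := fun x ↦ (Q.rnDeriv P x).toReal - 1
  by_cases hχ : ∫⁻ x, ENNReal.ofReal (h x ^ 2) ∂P = ⊤
  · exact hχ ▸ le_top
  have hh : MemLp h 2 P := memLp_two_of_lintegral_ofReal_sq_ne_top
    ((Measure.measurable_rnDeriv Q P).ennreal_toReal.sub_const 1).aestronglyMeasurable hχ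
  have hf : MemLp (fun x ↦ φ x - ∫ y, φ y ∂P) 2 P :=
    (memLp_two_iff_integrable_sq (hφP.1.sub aestronglyMeasurable_const)).2 hvar
  rw [← ofReal_integral_eq_lintegral_ofReal ((memLp_two_iff_integrable_sq hh.1).1 hh)
    (.of_forall fun x ↦ sq_nonneg (h x))]
  refine ENNReal.ofReal_le_ofReal (div_le_of_le_mul₀ (integral_nonneg fun x ↦ sq_nonneg _)
    (integral_nonneg fun x ↦ sq_nonneg _) ?_)
  rw [← integral_sub_mul_toReal_rnDeriv_sub_one hQP hφQ hφP (∫ y, φ y ∂P), mul_comm]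
  exact sq_integral_mul_le_integral_sq_mul_integral_sq hf hh

theorem hcr_inequality
    {Ω : Type*} [MeasurableSpace Ω] (P Q : Measure Ω)
    [IsProbabilityMeasure P] [IsProbabilityMeasure Q] (hQP : Q ≪ P)
    (φ : Ω → ℝ) (hφ : Measurable φ) (hφP : Integrable φ P) (hφQ : Integrable φ Q)
    (hvar : Integrable (fun x => (φ x - ∫ y, φ y ∂P) ^ 2) P)
    (hpos : 0 < ∫ x, (φ x - ∫ y, φ y ∂P) ^ 2 ∂P) :
    ENNReal.ofReal ((∫ x, φ x ∂Q - ∫ x, φ x ∂P) ^ 2 / ∫ x, (φ x - ∫ y, φ y ∂P) ^ 2 ∂P) ≤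
      ∫⁻ x, ENNReal.ofReal (((Q.rnDeriv P x).toReal - 1) ^ 2) ∂P :=
  hcr_inequality_general P Q hQP φ hφP hφQ hvar
end
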